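/- arXiv:2211.11726 — 4 statements merged into one kernel-verified Lean document; each statement's English description precedes it below -/
import Mathlib

section
/- Splitting lower bound: Let p ∈ [0,1]^k be a pseudo-distribution and let q be a pseudo-distribution obtained by splitting each entry p(i) into entries q(i,j) with Σ_j q(i,j) = p(i). If q(i,j) ≤ p(i)/γ for every i,j and some γ ≥ 1, then H(q) ≥ H(p) + ‖p‖·log(γ), where ‖p‖ = Σ_i p(i). -/
/-! Each part `q i j ≤ p i / γ` has `-log (q i j) ≥ log γ - log (p i)`; weighting these bounds by
`q i j` and summing over `j` gives `H(q i ·) ≥ p i * (log γ - log (p i)) = Hf (p i) + p i * log γ`. -/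

/-- Entropy of a single value, `H(u) = -u * log u` (natural logarithm). -/
noncomputable def Hf (u : ℝ) : ℝ := -u * Real.log u

namespace Real

theorem neg_mul_log_le_negMulLog_of_le {x c : ℝ} (hx : 0 ≤ x) (hxc : x ≤ c) :
    -x * log c ≤ negMulLog x := by
  rcases hx.eq_or_lt with rfl | hx
  · simp
  rw [negMulLog, neg_mul, neg_mul, neg_le_neg_iff]
  exact mul_le_mul_of_nonneg_left (log_le_log hx hxc) hx.le

theorem negMulLog_sum_add_sum_mul_log_le {ι : Type*} (s : Finset ι) (q : ι → ℝ) {γ : ℝ}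
    (hγ : 0 < γ) (hq : ∀ j ∈ s, 0 ≤ q j) (hbound : ∀ j ∈ s, q j ≤ (∑ j ∈ s, q j) / γ) :
    negMulLog (∑ j ∈ s, q j) + (∑ j ∈ s, q j) * log γ ≤ ∑ j ∈ s, negMulLog (q j) := by
  set p := ∑ j ∈ s, q j
  have hlhs : negMulLog p + p * log γ = -p * log (p / γ) := by
    rcases eq_or_ne p 0 with hp | hp
    · simp [hp]
    · rw [negMulLog, log_div hp hγ.ne']
      ring
  calc negMulLog p + p * log γ = ∑ j ∈ s, -q j * log (p / γ) := by
        rw [hlhs, ← Finset.sum_mul, Finset.sum_neg_distrib]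
    _ ≤ ∑ j ∈ s, negMulLog (q j) :=
        Finset.sum_le_sum fun j hj => neg_mul_log_le_negMulLog_of_le (hq j hj) (hbound j hj)

end Real

theorem splitting_lower_bound_general (k : ℕ) (p : Fin k → ℝ) (m : Fin k → ℕ)
    (q : (i : Fin k) → Fin (m i) → ℝ) (γ : ℝ) (hγ : 1 ≤ γ)
    (hq0 : ∀ i j, 0 ≤ q i j)
    (hsplit : ∀ i, ∑ j, q i j = p i)
    (hbound : ∀ i j, q i j ≤ p i / γ) :
    (∑ i, Hf (p i)) + (∑ i, p i) * Real.log γ ≤ ∑ i, ∑ j, Hf (q i j) := by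
  rw [Finset.sum_mul, ← Finset.sum_add_distrib]
  refine Finset.sum_le_sum fun i _ => ?_
  have hblock := Real.negMulLog_sum_add_sum_mul_log_le Finset.univ (q i)
    (by linarith : (0 : ℝ) < γ) (fun j _ => hq0 i j) (fun j _ => (hsplit i).symm ▸ hbound i j)
  rwa [hsplit i] at hblock

/-- Splitting lower bound: if a pseudo-distribution `q` is obtained from a
pseudo-distribution `p` by splitting each entry `p i` into entries `q i j`
(with `∑ j, q i j = p i`) such that every split entry is at most `p i / γ` for
some `γ ≥ 1`, then `H(q) ≥ H(p) + ‖p‖ * log γ`. -/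
theorem splitting_lower_bound (k : ℕ) (p : Fin k → ℝ) (m : Fin k → ℕ)
    (q : (i : Fin k) → Fin (m i) → ℝ) (γ : ℝ) (hγ : 1 ≤ γ)
    (hp0 : ∀ i, 0 ≤ p i) (hp1 : ∀ i, p i ≤ 1)
    (hq0 : ∀ i j, 0 ≤ q i j) (hq1 : ∀ i j, q i j ≤ 1)
    (hsplit : ∀ i, ∑ j, q i j = p i)
    (hbound : ∀ i j, q i j ≤ p i / γ) :
    (∑ i, Hf (p i)) + (∑ i, p i) * Real.log γ ≤ ∑ i, ∑ j, Hf (q i j) :=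
  splitting_lower_bound_general k p m q γ hγ hq0 hsplit hbound
end

section
/- Merging lower bound: Suppose a pseudo-distribution p on [k'] is obtained from a pseudo-distribution q on a finite set S by merging, i.e., there is a partition S_1,...,S_{k'} of S with p(i) = Σ_{j ∈ S_i} q(j), and each part satisfies |S_i| ≤ γ. Then H(p) ≥ H(q) − ‖q‖·log(γ). -/
/-!
Within each part `S_i`, concavity of `x ↦ -x log x` (Jensen with uniform weights) gives
`∑_{j ∈ S_i} H(q j) ≤ H(p i) + p i · log |S_i|`. Summing over the parts and using
`|S_i| ≤ γ` bounds the total correction by `‖q‖ · log γ`.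
-/

open Finset Real

lemma Hf_eq_negMulLog : Hf = negMulLog := rfl

namespace Real

lemma negMulLog_mul_inv (x y : ℝ) : negMulLog (x * y⁻¹) = y⁻¹ * (negMulLog x + x * log y) := by
  rw [negMulLog_mul, negMulLog_def]
  simp only [log_inv]
  ring

lemma sum_negMulLog_le_negMulLog_sum_add {ι : Type*} (t : Finset ι) (q : ι → ℝ)
    (hq : ∀ j ∈ t, 0 ≤ q j) :
    ∑ j ∈ t, negMulLog (q j) ≤ negMulLog (∑ j ∈ t, q j) + (∑ j ∈ t, q j) * log #t := by
  rcases t.eq_empty_or_nonempty with rfl | ht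
  · simp
  have hn : (0 : ℝ) < #t := by exact_mod_cast ht.card_pos
  have hjensen := concaveOn_negMulLog.le_map_sum (t := t) (w := fun _ => (#t : ℝ)⁻¹)
    (fun _ _ => by positivity) (by simp [hn.ne']) hq
  simp only [smul_eq_mul, ← mul_sum, mul_comm (#t : ℝ)⁻¹ (∑ j ∈ t, q j),
    negMulLog_mul_inv] at hjensen
  exact le_of_mul_le_mul_left hjensen (inv_pos.mpr hn)

end Real

lemma sum_negMulLog_le_sum_negMulLog_fiberwise_add {S ι : Type*} [Fintype S] [Fintype ι]
    [DecidableEq ι] (f : S → ι) (q : S → ℝ) (hq : ∀ j, 0 ≤ q j) (γ : ℕ)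
    (hγ : ∀ i, #{j | f j = i} ≤ γ) :
    ∑ j, negMulLog (q j) ≤ ∑ i, negMulLog (∑ j with f j = i, q j) + (∑ j, q j) * log γ := by
  rw [← sum_fiberwise univ f, ← sum_fiberwise univ f q, sum_mul, ← sum_add_distrib]
  refine sum_le_sum fun i _ => ?_
  have hpart := sum_negMulLog_le_negMulLog_sum_add {j | f j = i} q fun j _ => hq j
  have hlog : (∑ j with f j = i, q j) * log #{j | f j = i}
      ≤ (∑ j with f j = i, q j) * log γ := by
    rcases eq_or_ne #{j | f j = i} 0 with hempty | hne
    · simp [card_eq_zero.mp hempty]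
    · exact mul_le_mul_of_nonneg_left (log_le_log (by positivity) (by exact_mod_cast hγ i))
        (sum_nonneg fun j _ => hq j)
  linarith

theorem merging_lower_bound_general {S : Type*} [Fintype S] (k' γ : ℕ)
    (q : S → ℝ) (hq0 : ∀ j, 0 ≤ q j)
    (f : S → Fin k')
    (hγ : ∀ i : Fin k', (Finset.univ.filter (fun j => f j = i)).card ≤ γ)
    (p : Fin k' → ℝ)
    (hp : ∀ i, p i = ∑ j ∈ Finset.univ.filter (fun j => f j = i), q j) :
    (∑ j, Hf (q j)) - (∑ j, q j) * Real.log γ ≤ ∑ i, Hf (p i) := by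
  have hmerge := sum_negMulLog_le_sum_negMulLog_fiberwise_add f q hq0 γ hγ
  simp only [← hp] at hmerge
  rw [Hf_eq_negMulLog, sub_le_iff_le_add]
  exact hmerge

/-- Merging lower bound: if the pseudo-distribution `p` on `[k']` is obtained
from a pseudo-distribution `q` on a finite set `S` by merging along a partition
into fibers of a map `f : S → Fin k'` (i.e. `p i = ∑_{j : f j = i} q j`), and
each part has at most `γ` elements, then `H(p) ≥ H(q) - ‖q‖ * log γ`. -/
theorem merging_lower_bound {S : Type*} [Fintype S] (k' γ : ℕ)
    (q : S → ℝ) (hq0 : ∀ j, 0 ≤ q j) (hq1 : ∀ j, q j ≤ 1)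
    (f : S → Fin k')
    (hγ : ∀ i : Fin k', (Finset.univ.filter (fun j => f j = i)).card ≤ γ)
    (p : Fin k' → ℝ)
    (hp : ∀ i, p i = ∑ j ∈ Finset.univ.filter (fun j => f j = i), q j) :
    (∑ j, Hf (q j)) - (∑ j, q j) * Real.log γ ≤ ∑ i, Hf (p i) :=
  merging_lower_bound_general k' γ q hq0 f hγ p hp
end

section
/- Stable entropy of two-step mixing: if p' is obtained from pseudo-distribution p by a two-step mixing process, then H(p') ≥ H(p). -/
/-!
The map `p ↦ p'` is multiplication by the symmetric matrix
`M v u = ∑_{W ∋ u, v} γ_v γ_u / γ_W`, whose row sums are `γ_v w(v) = 1`; so `M` is doubly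
stochastic. For any concave `f`, Jensen's inequality on each row of `M`, summed over the rows,
gives `∑ f (p v) ≤ ∑ f ((M p) v)`, because the columns of `M` also sum to `1`.
-/

open Finset

open Matrix

theorem ConcaveOn.sum_le_sum_mulVec_of_mem_doublyStochastic {𝕜 n : Type*} [Field 𝕜]
    [LinearOrder 𝕜] [IsStrictOrderedRing 𝕜] [Fintype n] [DecidableEq n] {s : Set 𝕜} {f : 𝕜 → 𝕜}
    (hf : ConcaveOn 𝕜 s f) {M : Matrix n n 𝕜} (hM : M ∈ doublyStochastic 𝕜 n) {x : n → 𝕜}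
    (hx : ∀ j, x j ∈ s) : ∑ j, f (x j) ≤ ∑ i, f ((M *ᵥ x) i) :=
  calc ∑ j, f (x j) = ∑ j, (∑ i, M i j) * f (x j) := by
        simp only [sum_col_of_mem_doublyStochastic hM, one_mul]
    _ = ∑ i, ∑ j, M i j • f (x j) := by
        simp only [sum_mul, smul_eq_mul]
        exact sum_comm
    _ ≤ ∑ i, f (∑ j, M i j • x j) := sum_le_sum fun i _ =>
        hf.le_map_sum (fun j _ => hM.1 i j) (sum_row_of_mem_doublyStochastic hM i) fun j _ => hx j
    _ = ∑ i, f ((M *ᵥ x) i) := by simp only [smul_eq_mul, mulVec, dotProduct]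

section Mixing

variable {V ι : Type*} [DecidableEq V] [Fintype ι]

noncomputable def mixingMatrix (W : ι → Finset V) (γ : V → ℝ) : Matrix V V ℝ :=
  fun v u => ∑ i with v ∈ W i ∧ u ∈ W i, γ v * γ u / ∑ x ∈ W i, γ x

theorem mixingMatrix_comm (W : ι → Finset V) (γ : V → ℝ) (v u : V) :
    mixingMatrix W γ v u = mixingMatrix W γ u v := by
  simp only [mixingMatrix, and_comm, mul_comm (γ v)]

theorem mulVec_mixingMatrix [Fintype V] (W : ι → Finset V) (γ p : V → ℝ) (v : V) :
    (mixingMatrix W γ *ᵥ p) v =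
      ∑ i with v ∈ W i, γ v / (∑ x ∈ W i, γ x) * ∑ u ∈ W i, γ u * p u := by
  simp only [mulVec, dotProduct, mixingMatrix, sum_mul, mul_sum, sum_filter]
  rw [sum_comm]
  refine sum_congr rfl fun i _ => ?_
  split_ifs with hv
  · simp only [hv, true_and, ite_mul, zero_mul, sum_ite_mem, univ_inter]
    exact sum_congr rfl fun u _ => by ring
  · simp [hv]

theorem mixingMatrix_mem_doublyStochastic [Fintype V] {W : ι → Finset V} {γ : V → ℝ}
    (hγ : ∀ v, γ v * #{i | v ∈ W i} = 1) : mixingMatrix W γ ∈ doublyStochastic ℝ V := by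
  have hγpos : ∀ v, 0 < γ v := fun v => by
    have := hγ v
    have : (0 : ℝ) ≤ #{i | v ∈ W i} := Nat.cast_nonneg _
    by_contra! h
    nlinarith
  have hrow : ∀ v, ∑ u, mixingMatrix W γ v u = 1 := fun v => by
    have := mulVec_mixingMatrix W γ 1 v
    simp only [mulVec, dotProduct, Pi.one_apply, mul_one] at this
    rw [this, ← hγ v, mul_comm, ← nsmul_eq_mul, ← sum_const]
    refine sum_congr rfl fun i hi => div_mul_cancel₀ _ (sum_pos (fun u _ => hγpos u) ⟨v, ?_⟩).ne'
    simpa using hi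
  refine mem_doublyStochastic_iff_sum.2 ⟨fun v u => ?_, hrow, fun u => ?_⟩
  · exact sum_nonneg fun i hi => div_nonneg (mul_pos (hγpos v) (hγpos u)).le
      (sum_pos (fun x _ => hγpos x) ⟨v, (mem_filter.1 hi).2.1⟩).le
  · simpa only [mixingMatrix_comm W γ _ u] using hrow u

end Mixing

theorem two_step_mixing_stable_entropy_general {V ι : Type*} [Fintype V] [DecidableEq V] [Fintype ι]
    (W : ι → Finset V) (p : V → ℝ)
    (hp0 : ∀ v, 0 ≤ p v)
    (w : V → ℕ) (hw : ∀ v, w v = (univ.filter (fun i => v ∈ W i)).card)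
    (hwpos : ∀ v, 0 < w v)
    (γ : V → ℝ) (hγ : ∀ v, γ v = 1 / (w v : ℝ))
    (q : ι → ℝ) (hq : ∀ i, q i = ∑ v ∈ W i, γ v * p v)
    (γW : ι → ℝ) (hγW : ∀ i, γW i = ∑ v ∈ W i, γ v)
    (p' : V → ℝ)
    (hp' : ∀ v, p' v = ∑ i ∈ univ.filter (fun i => v ∈ W i), (γ v / γW i) * q i) :
    ∑ v, Hf (p v) ≤ ∑ v, Hf (p' v) := by
  have hγw : ∀ v, γ v * #{i | v ∈ W i} = 1 := fun v => by
    have := hwpos v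
    rw [hγ, ← hw]
    field_simp
  have hp'_eq : p' = mixingMatrix W γ *ᵥ p := funext fun v => by
    simp only [hp', mulVec_mixingMatrix, hγW, hq]
  rw [hp'_eq]
  exact Real.concaveOn_negMulLog.sum_le_sum_mulVec_of_mem_doublyStochastic
    (mixingMatrix_mem_doublyStochastic hγw) fun v => Set.mem_Ici.2 (hp0 v)

/-- Stable entropy of the two-step mixing process: if `p'` is obtained from the
pseudo-distribution `p` by a two-step mixing process, then `H(p') ≥ H(p)`. -/
theorem two_step_mixing_stable_entropy {V ι : Type*} [Fintype V] [DecidableEq V] [Fintype ι]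
    (W : ι → Finset V) (p : V → ℝ)
    (hp0 : ∀ v, 0 ≤ p v) (hp1 : ∀ v, p v ≤ 1)
    (w : V → ℕ) (hw : ∀ v, w v = (univ.filter (fun i => v ∈ W i)).card)
    (hwpos : ∀ v, 0 < w v)
    (γ : V → ℝ) (hγ : ∀ v, γ v = 1 / (w v : ℝ))
    (q : ι → ℝ) (hq : ∀ i, q i = ∑ v ∈ W i, γ v * p v)
    (γW : ι → ℝ) (hγW : ∀ i, γW i = ∑ v ∈ W i, γ v)
    (p' : V → ℝ)
    (hp' : ∀ v, p' v = ∑ i ∈ univ.filter (fun i => v ∈ W i), (γ v / γW i) * q i) :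
    ∑ v, Hf (p v) ≤ ∑ v, Hf (p' v) :=
  two_step_mixing_stable_entropy_general W p hp0 w hw hwpos γ hγ q hq γW hγW p' hp'
end

section
/- Iteration-wise entropy increase: if p is an ℓ-typical distribution (its typical part has size ≥ 1−ℓ), each typical entry is split into at least k² pieces each of value at most load_M·(value)/k², the leaked part evolves with non-decreasing entropy, and the result p' is obtained by merging at most load_M·k + 1 entries per vertex, then H(p') ≥ H(p) + (1−ℓ)·log(k²/load_M) − log(load_M·k + 1). -/
lemma Hf_subadd {a b : ℝ} (ha : 0 ≤ a) (hb : 0 ≤ b) : Hf (a + b) ≤ Hf a + Hf b := by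
  have key : ∀ x y : ℝ, 0 ≤ x → x ≤ y → -x * Real.log y ≤ Hf x := by
    intro x y hx hxy
    rcases eq_or_lt_of_le hx with h | h
    · simp [Hf, ← h]
    · have := Real.log_le_log (by linarith) hxy
      unfold Hf; nlinarith
  have h1 := key a (a + b) ha (by linarith)
  have h2 := key b (a + b) hb (by linarith)
  have : Hf (a + b) = -a * Real.log (a + b) + -b * Real.log (a + b) := by
    unfold Hf; ring
  linarith

/-- Iteration-wise entropy increase: if the distribution `p = p̃ + p̂` is
`ℓ`-typical (`‖p̃‖ ≥ 1 − ℓ`), the typical part splits into `q̃₂` with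
`H(q̃₂) ≥ H(p̃) + (1−ℓ)·log(k²/L)`, the leaked part evolves with non-decreasing
entropy `H(p̂') ≥ H(p̂)`, and `p'` results from merging with
`H(p') ≥ H(q̃₂) + H(p̂') − log(L·k + 1)`, then
`H(p') ≥ H(p) + (1−ℓ)·log(k²/L) − log(L·k + 1)`. -/
theorem entropy_increase_single_commodity {V ι : Type*} [Fintype V] [Fintype ι]
    (p ptil phat phat' p' : V → ℝ) (q2 : ι → ℝ) (ℓ k L : ℝ)
    (hdecomp : ∀ v, p v = ptil v + phat v)
    (hdist : ∑ v, p v = 1)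
    (htil0 : ∀ v, 0 ≤ ptil v) (hhat0 : ∀ v, 0 ≤ phat v)
    (htypical : 1 - ℓ ≤ ∑ v, ptil v)
    (hsplit : (∑ v, Hf (ptil v)) + (1 - ℓ) * Real.log (k ^ 2 / L)
      ≤ ∑ i, Hf (q2 i))
    (hleak : ∑ v, Hf (phat v) ≤ ∑ v, Hf (phat' v))
    (hmerge : (∑ i, Hf (q2 i)) + (∑ v, Hf (phat' v)) - Real.log (L * k + 1)
      ≤ ∑ v, Hf (p' v)) :
    (∑ v, Hf (p v)) + (1 - ℓ) * Real.log (k ^ 2 / L) - Real.log (L * k + 1)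
      ≤ ∑ v, Hf (p' v) := by
  have hsub : ∑ v, Hf (p v) ≤ (∑ v, Hf (ptil v)) + ∑ v, Hf (phat v) := by
    rw [← Finset.sum_add_distrib]
    refine Finset.sum_le_sum fun v _ => ?_
    rw [hdecomp v]
    exact Hf_subadd (htil0 v) (hhat0 v)
  linarith
end
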